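/- arXiv:2505.03224 — 2 statements merged into one kernel-verified Lean document; each statement's English description precedes it below -/
import Mathlib

section
/- Let F be an algebraically closed field of characteristic p > 0, q = p^ℓ with ℓ ≥ 1, θ ∈ F, and n ≥ 1. Then for any x_0, x_1, …, x_{n−1} ∈ F there exists B ∈ F[t] such that t·(∑_{j=0}^{n−1} x_j·(t−θ)^j) − (θ·x_0 + ∑_{j=1}^{n−1} (θ·x_j + x_{j−1})·(t−θ)^j) = (φ(B) − B)·(t−θ)^n. (This shows that under the identification of Ext¹_ℱ(M_{C^{⊗n}}, M_{C^{⊗n}}) with F^n via degree-<n representatives ∑ x_j(t−θ)^j ↦ (x_{n−1},…,x_0)ᵀ, multiplication by t acts by the n×n upper-triangular Jordan block [t]_n with diagonal θ.) -/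
/-!
The left-hand side telescopes to `x_{n-1} (t - θ)^n`, so a constant `B = b` suffices, with
`φ(b) - b = x_{n-1}`. Writing `b = y^q`, this is the Artin–Schreier equation
`y - y^q = x_{n-1}`, which has a root because `F` is algebraically closed.
-/

open Polynomial

theorem X_mul_sum_sub_jordanBlock_eq {R : Type*} [CommRing R] (θ : R) (x : ℕ → R) (m : ℕ) :
    X * (∑ j ∈ Finset.range (m + 1), C (x j) * (X - C θ) ^ j)
        - (C (θ * x 0) + ∑ j ∈ Finset.Ico 1 (m + 1), C (θ * x j + x (j - 1)) * (X - C θ) ^ j)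
      = C (x m) * (X - C θ) ^ (m + 1) := by
  induction m with
  | zero => simp only [zero_add, Finset.sum_range_one, Finset.Ico_self, Finset.sum_empty,
      pow_zero, pow_one, mul_one, add_zero, map_mul]; ring
  | succ m ih =>
    rw [Finset.sum_range_succ, Finset.sum_Ico_succ_top (by omega), Nat.add_sub_cancel]
    simp only [map_add, map_mul] at ih ⊢
    linear_combination ih

theorem IsAlgClosed.exists_pow_sub_self_eq {k : Type*} [Field k] [IsAlgClosed k] {m : ℕ}
    (hm : 1 < m) (c : k) : ∃ y : k, y ^ m - y = c := by
  have hXm : (X ^ m - X : k[X]).degree = m := by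
    rw [degree_sub_eq_left_of_degree_lt (by rw [degree_X, degree_X_pow]; exact_mod_cast hm),
      degree_X_pow]
  have hdeg : (X ^ m - X - C c : k[X]).degree = m := by
    rw [degree_sub_C (by rw [hXm]; exact_mod_cast hm.trans' zero_lt_one), hXm]
  obtain ⟨y, hy⟩ := IsAlgClosed.exists_root _ (by rw [hdeg]; exact_mod_cast (by omega : m ≠ 0))
  exact ⟨y, by simpa [sub_eq_zero] using hy⟩

theorem exists_iterateFrobeniusEquiv_symm_sub_eq {F : Type*} [Field F] [IsAlgClosed F]
    (p : ℕ) [Fact p.Prime] [CharP F p] {ℓ : ℕ} (hℓ : 1 ≤ ℓ) (c : F) :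
    ∃ b : F, (iterateFrobeniusEquiv F p ℓ).symm b - b = c := by
  obtain ⟨y, hy⟩ := IsAlgClosed.exists_pow_sub_self_eq (m := p ^ ℓ)
    (Nat.one_lt_pow (by omega) (Fact.out : p.Prime).one_lt) (-c)
  refine ⟨iterateFrobeniusEquiv F p ℓ y, ?_⟩
  rw [RingEquiv.symm_apply_apply, iterateFrobeniusEquiv_def]
  linear_combination -hy

theorem t_action_on_ext_is_jordan_block_general
    (F : Type*) [Field F] [IsAlgClosed F] (p ℓ : ℕ) [Fact p.Prime] [CharP F p]
    (hℓ : 1 ≤ ℓ) (θ : F) (n : ℕ) (hn : 1 ≤ n) (x : ℕ → F) :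
    ∃ B : Polynomial F,
      X * (∑ j ∈ Finset.range n, C (x j) * (X - C θ) ^ j)
          - (C (θ * x 0) + ∑ j ∈ Finset.Ico 1 n, C (θ * x j + x (j - 1)) * (X - C θ) ^ j)
        = (Polynomial.map ((iterateFrobeniusEquiv F p ℓ).symm : F →+* F) B - B) *
            (X - C θ) ^ n := by
  obtain ⟨m, rfl⟩ := Nat.exists_eq_add_of_le' hn
  obtain ⟨b, hb⟩ := exists_iterateFrobeniusEquiv_symm_sub_eq p hℓ (x m)
  refine ⟨C b, ?_⟩
  rw [X_mul_sum_sub_jordanBlock_eq, map_C, ← C_sub, RingEquiv.coe_toRingHom, hb]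

/-- Let `F` be an algebraically closed field of characteristic `p > 0`,
`q = p^ℓ`, `θ ∈ F`, `n ≥ 1`. For any `x_0, …, x_{n-1} ∈ F` there exists `B ∈ F[t]` with
`t·(∑_{j<n} x_j (t-θ)^j) - (θ x_0 + ∑_{j=1}^{n-1} (θ x_j + x_{j-1}) (t-θ)^j)
  = (φ(B) - B)·(t-θ)^n`,
where `φ` applies the inverse of the `q`-power automorphism to each coefficient; i.e.
multiplication by `t` on Ext¹ acts by the Jordan block `[t]_n` on degree-`< n`
representatives. -/
theorem t_action_on_ext_is_jordan_block
    (F : Type*) [Field F] [IsAlgClosed F] (p ℓ q : ℕ) [Fact p.Prime] [CharP F p]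
    (hℓ : 1 ≤ ℓ) (hq : q = p ^ ℓ) (θ : F) (n : ℕ) (hn : 1 ≤ n) (x : ℕ → F) :
    ∃ B : Polynomial F,
      X * (∑ j ∈ Finset.range n, C (x j) * (X - C θ) ^ j)
          - (C (θ * x 0) + ∑ j ∈ Finset.Ico 1 n, C (θ * x j + x (j - 1)) * (X - C θ) ^ j)
        = (Polynomial.map ((iterateFrobeniusEquiv F p ℓ).symm : F →+* F) B - B) *
            (X - C θ) ^ n :=
  t_action_on_ext_is_jordan_block_general F p ℓ hℓ θ n hn x
end

section
/- Let n ≥ 1 and u ∈ K_∞ with |u|_∞ < q^n. Work in the ring R := K_∞[[t]] of formal power series over K_∞, equipped with the product topology on coefficients. For i ∈ ℕ set g_i := u^{q^{i+1}} · ((C(θ^{q^{i+1}}) − t)⁻¹)^n ∈ R, where the inverse exists since the constant term θ^{q^{i+1}} is a nonzero element of the field K_∞. Then: (a) the family (g_i)_{i∈ℕ} is summable in R; and (b) its sum 𝓛 := ∑'_{i∈ℕ} g_i satisfies (t − C(θ^q))^n · (𝓛 − Φ(𝓛)) = C((−1)^n · u^q), where Φ : R → R is the ring homomorphism raising each coefficient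 to its q-th power. (This is the once-twisted form of the Frobenius difference equation 𝓛_{u,n}^{(−1)} = (−1)^n u/(t−θ)^n + 𝓛_{u,n} satisfied by the t-deformation 𝓛_{u,n} = ∑_{i≥1} u^{q^i}/(θ^{q^i} − t)^n of the n-th Kochubei polylogarithm.) -/
open FunctionField
open scoped Multiplicative

/-- The canonical ring homomorphism from `K = 𝔽_q(θ)` into its completion
`K_∞ = 𝔽_q((1/θ))` at the infinite place. -/
noncomputable def ratFuncToFqtInfty (Fq : Type*) [Field Fq] [DecidableEq (RatFunc Fq)] :
    RatFunc Fq →+* RatFunc.CompletionAtInfty Fq :=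
  letI := RatFunc.inftyValued Fq
  UniformSpace.Completion.coeRingHom

/-!
Expanding `(θ^Q - t)⁻¹` as a geometric series in `t / θ^Q` shows that the `k`-th coefficient of
`u^Q (θ^Q - t)^{-n}` has absolute value at most `|u / θ^n|^Q`, because `|θ| ≥ 1`. Since
`|u| < q^n = |θ|^n`, these bounds tend to `0` along `Q = q^{i+1}`, and in the complete
nonarchimedean field `K_∞` this makes every coefficient series summable. The Frobenius twist
`Φ` is continuous and sends the `i`-th term to the `(i+1)`-st, so `𝓛 - Φ 𝓛` telescopes to the
`0`-th term `u^q (θ^q - t)^{-n}`, and multiplying by `(t - θ^q)^n` leaves `(-1)^n u^q`.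
-/

open Filter Topology

namespace PowerSeries

theorem map_inv {k k' : Type*} [Field k] [Field k'] (f : k →+* k') (φ : k⟦X⟧) :
    map f φ⁻¹ = (map f φ)⁻¹ := by
  have hc : constantCoeff (map f φ) = f (constantCoeff φ) := MvPowerSeries.constantCoeff_map _ _
  by_cases h : constantCoeff φ = 0
  · rw [inv_eq_zero.mpr h, inv_eq_zero.mpr (by rw [hc, h, map_zero]), map_zero]
  · rw [eq_comm, inv_eq_iff_mul_eq_one (by rwa [hc, map_ne_zero]), ← map_mul,
      PowerSeries.inv_mul_cancel _ h, map_one]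

theorem inv_C_sub_X {k : Type*} [Field k] {a : k} (ha : a ≠ 0) :
    (C a - X)⁻¹ = mk fun j => a⁻¹ ^ (j + 1) := by
  have h : mk (fun j => a⁻¹ ^ (j + 1)) = invUnitsSub (Units.mk0 a ha) := by
    ext j
    simp [coeff_invUnitsSub, divp, inv_pow]
  rw [PowerSeries.inv_eq_iff_mul_eq_one (by simpa using ha), h]
  exact invUnitsSub_mul_sub _

theorem X_sub_C_pow_mul_C_mul_inv_C_sub_X_pow {k : Type*} [Field k] {a : k} (ha : a ≠ 0)
    (b : k) (n : ℕ) : (X - C a) ^ n * (C b * ((C a - X)⁻¹) ^ n) = C ((-1) ^ n * b) := by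
  have h : (X - C a) * (C a - X)⁻¹ = -1 := by
    rw [← neg_sub, neg_mul, PowerSeries.mul_inv_cancel _ (by simpa using ha)]
  rw [map_mul, map_pow, map_neg, map_one, mul_left_comm, ← mul_pow, h, mul_comm]

section Valuation

variable {Γ₀ : Type*} [LinearOrderedCommGroupWithZero Γ₀]

theorem valuation_coeff_pow_le {R : Type*} [CommRing R] (v : Valuation R Γ₀) {f : R⟦X⟧} {c : Γ₀}
    (hf : ∀ j, v (coeff j f) ≤ c ^ (j + 1)) : ∀ n k, v (coeff k (f ^ n)) ≤ c ^ (k + n)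
  | 0, 0 => by simp
  | 0, k + 1 => by simp [coeff_one]
  | n + 1, k => by
    rw [pow_succ, coeff_mul]
    refine v.map_sum_le fun ij hij => ?_
    rw [v.map_mul, ← Finset.HasAntidiagonal.mem_antidiagonal.mp hij,
      show ij.1 + ij.2 + (n + 1) = (ij.1 + n) + (ij.2 + 1) by omega, pow_add]
    exact mul_le_mul' (valuation_coeff_pow_le v hf n ij.1) (hf ij.2)

theorem valuation_coeff_C_mul_inv_C_sub_X_pow_le {K : Type*} [Field K] (v : Valuation K Γ₀)
    {b : K} (hb : 1 ≤ v b) (c : K) (n k : ℕ) :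
    v (coeff k (C c * ((C b - X)⁻¹) ^ n)) ≤ v (c / b ^ n) := by
  have hb0 : b ≠ 0 := v.ne_zero_iff.mp (zero_lt_one.trans_le hb).ne'
  have hbinv : v b⁻¹ ≤ 1 := by
    rw [map_inv₀]
    exact inv_le_one_of_one_le₀ hb
  rw [inv_C_sub_X hb0, coeff_C_mul, v.map_mul, div_eq_mul_inv, v.map_mul, ← inv_pow, v.map_pow]
  gcongr
  calc v (coeff k ((mk fun j => b⁻¹ ^ (j + 1)) ^ n)) ≤ v b⁻¹ ^ (k + n) :=
        valuation_coeff_pow_le v (fun j => by rw [coeff_mk, v.map_pow]) n k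
    _ ≤ v b⁻¹ ^ n := pow_le_pow_right_of_le_one' hbinv (Nat.le_add_left n k)

end Valuation

theorem induced_coeff_eq_piTopology (R : Type*) [Semiring R] [TopologicalSpace R] :
    TopologicalSpace.induced (fun f (k : ℕ) => coeff k f) inferInstance =
      WithPiTopology.instTopologicalSpace R := by
  let := WithPiTopology.instTopologicalSpace R
  have hmk : Continuous (mk : (ℕ → R) → R⟦X⟧) := continuous_pi fun _ => continuous_apply _
  have hcoeff : Continuous fun (f : R⟦X⟧) (k : ℕ) => coeff k f :=
    continuous_pi (WithPiTopology.continuous_coeff R)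
  exact (Function.LeftInverse.isEmbedding (f := mk) (fun f => ext fun k => coeff_mk k _)
    hmk hcoeff).eq_induced.symm

theorem WithPiTopology.continuous_map {R S : Type*} [Semiring R] [Semiring S]
    [TopologicalSpace R] [TopologicalSpace S] {f : R →+* S} (hf : Continuous f) :
    Continuous (map f) :=
  continuous_pi fun _ => hf.comp (continuous_apply _)

end PowerSeries

namespace Valued

variable {R Γ₀ : Type*} [Ring R] [LinearOrderedCommGroupWithZero Γ₀] [Valued R Γ₀]

instance nonarchimedeanAddGroup : NonarchimedeanAddGroup R where
  is_nonarchimedean U hU := by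
    obtain ⟨γ, hγ⟩ := mem_nhds_zero.mp hU
    exact ⟨⟨v.restrict.ltAddSubgroup γ, isOpen_ball _ _⟩, hγ⟩

theorem tendsto_zero_of_valuation_le {ι : Type*} {l : Filter ι} {f g : ι → R}
    (hg : Tendsto g l (𝓝 0)) (hfg : ∀ i, v (f i) ≤ v (g i)) : Tendsto f l (𝓝 0) := by
  rw [(hasBasis_nhds_zero R Γ₀).tendsto_right_iff] at hg ⊢
  exact fun γ _ => (hg γ trivial).mono fun i hi =>
    ((Valuation.restrict_le_iff _).mpr (hfg i)).trans_lt hi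

end Valued

theorem tsum_sub_map_tsum_of_map_eq_succ {M G : Type*} [AddCommGroup M] [TopologicalSpace M]
    [IsTopologicalAddGroup M] [T2Space M] [FunLike G M M] [AddMonoidHomClass G M M] {F : G}
    (hF : Continuous F) {g : ℕ → M} (hg : Summable g) (hFg : ∀ i, F (g i) = g (i + 1)) :
    ∑' i, g i - F (∑' i, g i) = g 0 := by
  rw [← (hg.hasSum.map F hF).tsum_eq, hg.tsum_eq_zero_add]
  simp only [Function.comp_def, hFg, add_sub_cancel_right]

namespace PowerSeries

open scoped WithPiTopology

theorem summable_C_pow_mul_inv_C_pow_sub_X_pow {K Γ₀ : Type*} [Field K]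
    [LinearOrderedCommGroupWithZero Γ₀] [MulArchimedean Γ₀] [Valued K Γ₀] [CompleteSpace K]
    {u θ : K} {n : ℕ} (hθ : 1 ≤ Valued.v θ) (hu : Valued.v u < Valued.v θ ^ n) {Q : ℕ → ℕ}
    (hQ : Tendsto Q atTop atTop) :
    Summable fun i => C (u ^ Q i) * ((C (θ ^ Q i) - X)⁻¹) ^ n := by
  refine (WithPiTopology.summable_iff_summable_coeff _).mpr fun k => ?_
  have hlt : Valued.v (u / θ ^ n) < 1 := by
    rwa [map_div₀, map_pow, div_lt_one₀ (pow_pos (zero_lt_one.trans_le hθ) n)]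
  refine NonarchimedeanAddGroup.summable_of_tendsto_cofinite_zero ?_
  rw [Nat.cofinite_eq_atTop]
  refine Valued.tendsto_zero_of_valuation_le
    ((Valued.tendsto_zero_pow_of_v_lt_one hlt).comp hQ) fun i => ?_
  calc _ ≤ Valued.v (u ^ Q i / (θ ^ Q i) ^ n) :=
        valuation_coeff_C_mul_inv_C_sub_X_pow_le _ (by rw [map_pow]; exact one_le_pow₀ hθ) _ n k
    _ = Valued.v ((u / θ ^ n) ^ Q i) := by rw [div_pow, ← pow_mul, ← pow_mul, mul_comm]

theorem X_sub_C_pow_mul_tsum_sub_map_tsum {K : Type*} [Field K] [TopologicalSpace K]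
    [IsTopologicalRing K] [T2Space K] {φ : K →+* K} (hφ : Continuous φ) {a b : ℕ → K}
    (ha : ∀ i, φ (a i) = a (i + 1)) (hb : ∀ i, φ (b i) = b (i + 1)) (hb0 : b 0 ≠ 0) (n : ℕ)
    (hs : Summable fun i => C (a i) * ((C (b i) - X)⁻¹) ^ n) :
    (X - C (b 0)) ^ n * (∑' i, C (a i) * ((C (b i) - X)⁻¹) ^ n -
      map φ (∑' i, C (a i) * ((C (b i) - X)⁻¹) ^ n)) = C ((-1) ^ n * a 0) := by
  have hmap (i : ℕ) : map φ (C (a i) * ((C (b i) - X)⁻¹) ^ n) =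
      C (a (i + 1)) * ((C (b (i + 1)) - X)⁻¹) ^ n := by
    simp only [map_mul, map_pow, map_inv, map_sub, map_C, map_X, ha, hb]
  rw [tsum_sub_map_tsum_of_map_eq_succ (WithPiTopology.continuous_map hφ) hs hmap]
  exact X_sub_C_pow_mul_C_mul_inv_C_sub_X_pow hb0 _ n

theorem summable_and_frobenius_difference_equation {K Γ₀ : Type*} [Field K]
    [LinearOrderedCommGroupWithZero Γ₀] [MulArchimedean Γ₀] [Valued K Γ₀] [CompleteSpace K]
    (p ℓ : ℕ) [ExpChar K p] (hq : 1 < p ^ ℓ) {u θ : K} {n : ℕ} (hθ : 1 ≤ Valued.v θ)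
    (hu : Valued.v u < Valued.v θ ^ n) :
    let g : ℕ → K⟦X⟧ := fun i => C (u ^ (p ^ ℓ) ^ (i + 1)) * ((C (θ ^ (p ^ ℓ) ^ (i + 1)) - X)⁻¹) ^ n
    Summable g ∧
      (X - C (θ ^ p ^ ℓ)) ^ n * (∑' i, g i - map (iterateFrobenius K p ℓ) (∑' i, g i)) =
        C ((-1) ^ n * u ^ p ^ ℓ) := by
  intro g
  have hsum : Summable g := summable_C_pow_mul_inv_C_pow_sub_X_pow hθ hu
    ((tendsto_pow_atTop_atTop_of_one_lt hq).comp (tendsto_add_atTop_nat 1))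
  have hφ (x : K) (i : ℕ) :
      iterateFrobenius K p ℓ (x ^ (p ^ ℓ) ^ (i + 1)) = x ^ (p ^ ℓ) ^ (i + 1 + 1) := by
    rw [iterateFrobenius_def, ← pow_mul, ← pow_succ]
  have hθ0 : θ ≠ 0 := Valued.v.ne_zero_iff.mp (zero_lt_one.trans_le hθ).ne'
  refine ⟨hsum, ?_⟩
  simpa only [zero_add, pow_one] using X_sub_C_pow_mul_tsum_sub_map_tsum (continuous_pow (p ^ ℓ))
    (hφ u) (hφ θ) (pow_ne_zero _ hθ0) n hsum

end PowerSeries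

section CompletionAtInfty

variable (Fq : Type*) [Field Fq] [DecidableEq (RatFunc Fq)]

instance : CompleteSpace (RatFunc.CompletionAtInfty Fq) :=
  letI := RatFunc.inftyValued Fq
  UniformSpace.Completion.completeSpace (RatFunc Fq)

theorem valuation_ratFuncToFqtInfty (f : RatFunc Fq) :
    Valued.v (ratFuncToFqtInfty Fq f) = RatFunc.inftyValuation Fq f :=
  letI := RatFunc.inftyValued Fq
  Valued.valuedCompletion_apply f

end CompletionAtInfty

theorem tDeformation_summable_and_difference_equation_general
    (Fq : Type*) [Field Fq] [DecidableEq (RatFunc Fq)]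
    (p ℓ q : ℕ) [Fact p.Prime] (hℓ : 1 ≤ ℓ) (hq : q = p ^ ℓ)
    [CharP (RatFunc.CompletionAtInfty Fq) p]
    (n : ℕ) (u : RatFunc.CompletionAtInfty Fq)
    (hu : Valued.v u < (↑(Multiplicative.ofAdd (n : ℤ)) : WithZero (Multiplicative ℤ))) :
    letI : TopologicalSpace (PowerSeries (RatFunc.CompletionAtInfty Fq)) :=
      TopologicalSpace.induced
        (fun f (k : ℕ) => (PowerSeries.coeff k) f) inferInstance
    let θ : RatFunc.CompletionAtInfty Fq := ratFuncToFqtInfty Fq RatFunc.X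
    let g : ℕ → PowerSeries (RatFunc.CompletionAtInfty Fq) := fun i =>
      PowerSeries.C (u ^ q ^ (i + 1)) *
        ((PowerSeries.C (θ ^ q ^ (i + 1)) - PowerSeries.X)⁻¹) ^ n
    Summable g ∧
      (PowerSeries.X - PowerSeries.C (θ ^ q)) ^ n *
          ((∑' i, g i) - PowerSeries.map (iterateFrobenius (RatFunc.CompletionAtInfty Fq) p ℓ) (∑' i, g i))
        = PowerSeries.C ((-1) ^ n * u ^ q) := by
  rw [PowerSeries.induced_coeff_eq_piTopology]
  have hθ : Valued.v (ratFuncToFqtInfty Fq RatFunc.X) = WithZero.exp 1 := by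
    rw [valuation_ratFuncToFqtInfty, RatFunc.inftyValuation.X]
  subst hq
  refine PowerSeries.summable_and_frobenius_difference_equation p ℓ
    (Nat.one_lt_pow (by omega) (Fact.out : p.Prime).one_lt) ?_ ?_
  · rw [hθ, ← WithZero.exp_zero, WithZero.exp_le_exp]
    exact zero_le_one
  · rwa [hθ, ← WithZero.exp_nsmul, nsmul_one]

/-- Let `n ≥ 1` and `u ∈ K_∞` with `|u|_∞ < q^n`. In the power series
ring `R = K_∞[[t]]` with the product topology on coefficients, the family
`g_i = u^{q^{i+1}} · ((θ^{q^{i+1}} - t)⁻¹)^n` is summable, and its sum `𝓛` satisfies the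
twisted Frobenius difference equation
`(t - θ^q)^n · (𝓛 - Φ(𝓛)) = (-1)^n u^q`, where `Φ` raises each coefficient to its
`q`-th power. -/
theorem tDeformation_summable_and_difference_equation
    (Fq : Type*) [Field Fq] [Fintype Fq] [DecidableEq (RatFunc Fq)]
    (p ℓ q : ℕ) [Fact p.Prime] (hℓ : 1 ≤ ℓ) (hq : q = p ^ ℓ)
    (hcard : Fintype.card Fq = q) [CharP (RatFunc.CompletionAtInfty Fq) p]
    (n : ℕ) (hn : 1 ≤ n) (u : RatFunc.CompletionAtInfty Fq)
    (hu : Valued.v u < (↑(Multiplicative.ofAdd (n : ℤ)) : WithZero (Multiplicative ℤ))) :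
    letI : TopologicalSpace (PowerSeries (RatFunc.CompletionAtInfty Fq)) :=
      TopologicalSpace.induced
        (fun f (k : ℕ) => (PowerSeries.coeff k) f) inferInstance
    let θ : RatFunc.CompletionAtInfty Fq := ratFuncToFqtInfty Fq RatFunc.X
    let g : ℕ → PowerSeries (RatFunc.CompletionAtInfty Fq) := fun i =>
      PowerSeries.C (u ^ q ^ (i + 1)) *
        ((PowerSeries.C (θ ^ q ^ (i + 1)) - PowerSeries.X)⁻¹) ^ n
    Summable g ∧
      (PowerSeries.X - PowerSeries.C (θ ^ q)) ^ n *
          ((∑' i, g i) - PowerSeries.map (iterateFrobenius (RatFunc.CompletionAtInfty Fq) p ℓ) (∑' i, g i))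
        = PowerSeries.C ((-1) ^ n * u ^ q) :=
  tDeformation_summable_and_difference_equation_general Fq p ℓ q hℓ hq n u hu
end
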